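/- Let G = (V,E,ω) be a biconnected weighted graph, let L be a 1-page book-embedding of G whose first vertex s and last vertex t are adjacent in G, and let L0 > 0 and H0 > 0 be real numbers such that L0 · H0 = Σ_{e∈E} ω(e). Then G admits a two-dimensional book-embedding supported by L whose bounding box is a rectangle of width L0 and height H0 (hence whose area equals Σ_{e∈E} ω(e)); in particular s and t are the first and the last vertex of the supporting 1-page book-embedding, respectively. -/

import Mathlib

namespace Schematic

/-- A 1-page book-embedding of `G`: vertices are linearly ordered via an injective
real-valued placement `f`, and no two edges cross. -/
def IsBE {V : Type*} (G : SimpleGraph V) (f : V → ℝ) : Prop :=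
  Function.Injective f ∧
  ∀ a b c d : V, G.Adj a b → G.Adj c d → ¬ (f a < f c ∧ f c < f b ∧ f b < f d)

/-- Edge `(u,v)` wraps around edge `(w,z)` (equivalently, `(w,z)` is nested into `(u,v)`),
where `(w,z)` is written in increasing order. -/
def Wraps {V : Type*} (G : SimpleGraph V) (f : V → ℝ) (u v w z : V) : Prop :=
  G.Adj u v ∧ G.Adj w z ∧ s(u, v) ≠ s(w, z) ∧
  f u ≤ f w ∧ f w < f z ∧ f z ≤ f v

/-- A graph is biconnected if it has at least 3 vertices, is connected,
and deleting any single vertex leaves a connected graph. -/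
def IsBiconnected {V : Type*} (G : SimpleGraph V) : Prop :=
  3 ≤ Nat.card V ∧ G.Connected ∧
  ∀ v : V, (G.induce (({v} : Set V)ᶜ)).Connected

/-- A two-dimensional book-embedding of a weighted graph: a supporting 1-page
book-embedding given by the x-coordinates `x`, and for each edge `(u,v)` with `u ≺ v`
a rectangle `[x u, x v] × [ylo u v, yhi u v]` with `ylo u v ≥ 0`, area equal to the
weight of the edge, and `ylo u v` equal to the maximum of `yhi` over the edges nested
into `(u,v)` (`0` if there is no such edge). -/
def IsTwoDimBE {V : Type*} (G : SimpleGraph V) (ω : V → V → ℝ)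
    (x : V → ℝ) (ylo yhi : V → V → ℝ) : Prop :=
  IsBE G x ∧
  (∀ u v : V, ylo u v = ylo v u) ∧
  (∀ u v : V, yhi u v = yhi v u) ∧
  (∀ u v : V, G.Adj u v → 0 ≤ ylo u v) ∧
  (∀ u v : V, G.Adj u v → x u < x v →
    (x v - x u) * (yhi u v - ylo u v) = ω u v) ∧
  (∀ u v : V, G.Adj u v → x u < x v →
    (∀ w z : V, Wraps G x u v w z → yhi w z ≤ ylo u v) ∧
    ((∃ w z : V, Wraps G x u v w z ∧ ylo u v = yhi w z) ∨
     ((¬ ∃ w z : V, Wraps G x u v w z) ∧ ylo u v = 0)))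

open Classical in
/-- The sum of the weights of all edges of `G` (each unordered edge counted once,
in its `f`-increasing orientation). -/
noncomputable def totalWeight {V : Type*} [Fintype V] (G : SimpleGraph V)
    (ω : V → V → ℝ) (f : V → ℝ) : ℝ :=
  ∑ p : V × V, if G.Adj p.1 p.2 ∧ f p.1 < f p.2 then ω p.1 p.2 else 0

/-- `[X₁,X₂] × [Y₁,Y₂]` is the bounding box of the two-dimensional book-embedding:
the smallest axis-parallel rectangle containing all the rectangles of the edges. -/
def IsBoundingBox {V : Type*} (G : SimpleGraph V) (x : V → ℝ) (ylo yhi : V → V → ℝ)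
    (X₁ X₂ Y₁ Y₂ : ℝ) : Prop :=
  (∀ u v : V, G.Adj u v → x u < x v →
    X₁ ≤ x u ∧ x v ≤ X₂ ∧ Y₁ ≤ ylo u v ∧ yhi u v ≤ Y₂) ∧
  (∃ u v : V, G.Adj u v ∧ x u < x v ∧ x u = X₁) ∧
  (∃ u v : V, G.Adj u v ∧ x u < x v ∧ x v = X₂) ∧
  (∃ u v : V, G.Adj u v ∧ x u < x v ∧ ylo u v = Y₁) ∧
  (∃ u v : V, G.Adj u v ∧ x u < x v ∧ yhi u v = Y₂)


/-!
Read every edge from left to right. Without crossings these arcs form a laminar family under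
nesting, and in a biconnected graph whose extreme vertices `s, t` are adjacent every two
consecutive vertices are adjacent, so the gaps between consecutive vertices are the leaves.
Let `W e` be the weight of the arcs nested in `e` (itself included). The arc `(s, t)` reaches
height `H₀`, and every arc `e` passes the fraction `(W e - ω e) / W e` of its top height `yTop e`
down to the arcs just below it as their common top height `yBot e`. Giving each gap the width
`W / yTop`, every arc `e` gets the same width `W e / yTop e` (its children weigh `W e - ω e` and
reach `yBot e`), so its rectangle has area `ω e`; for `(s, t)` the width is `W / H₀ = L₀`.
-/

section Order

variable {V : Type*} {G : SimpleGraph V} {f : V → ℝ}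

def IsArc (G : SimpleGraph V) (f : V → ℝ) (p : V × V) : Prop :=
  G.Adj p.1 p.2 ∧ f p.1 < f p.2

def NestedIn (f : V → ℝ) (p e : V × V) : Prop :=
  f e.1 ≤ f p.1 ∧ f p.2 ≤ f e.2

def Consecutive (f : V → ℝ) (a b : V) : Prop :=
  f a < f b ∧ ∀ w, ¬ (f a < f w ∧ f w < f b)

noncomputable def orient (f : V → ℝ) (u v : V) : V × V :=
  if f u < f v then (u, v) else (v, u)

lemma NestedIn.refl (f : V → ℝ) (p : V × V) : NestedIn f p p := ⟨le_rfl, le_rfl⟩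

lemma NestedIn.trans {p q r : V × V} (hpq : NestedIn f p q) (hqr : NestedIn f q r) :
    NestedIn f p r :=
  ⟨hqr.1.trans hpq.1, hpq.2.trans hqr.2⟩

lemma NestedIn.eq_of_width_le (hf : Function.Injective f) {p q : V × V} (h : NestedIn f p q)
    (hw : f q.2 - f q.1 ≤ f p.2 - f p.1) : p = q :=
  Prod.ext (hf (by linarith [h.1, h.2])) (hf (by linarith [h.1, h.2]))

lemma NestedIn.antisymm (hf : Function.Injective f) {p q : V × V} (hpq : NestedIn f p q)
    (hqp : NestedIn f q p) : p = q :=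
  hpq.eq_of_width_le hf (by linarith [hqp.1, hqp.2])

lemma NestedIn.total (hf : IsBE G f) {p q c : V × V} (hp : G.Adj p.1 p.2) (hq : G.Adj q.1 q.2)
    (hc : f c.1 < f c.2) (hcp : NestedIn f c p) (hcq : NestedIn f c q) :
    NestedIn f p q ∨ NestedIn f q p := by
  by_contra h
  simp only [NestedIn, not_or, not_and_or, not_le] at h
  obtain ⟨h₁ | h₁, h₂ | h₂⟩ := h
  · linarith
  · exact hf.2 p.1 p.2 q.1 q.2 hp hq ⟨h₁, by linarith [hcq.1, hcp.2], h₂⟩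
  · exact hf.2 q.1 q.2 p.1 p.2 hq hp ⟨h₂, by linarith [hcp.1, hcq.2], h₁⟩
  · linarith

lemma Consecutive.le_of_lt {a b u : V} (hab : Consecutive f a b) (hu : f u < f b) :
    f u ≤ f a :=
  not_lt.1 fun h => hab.2 u ⟨h, hu⟩

lemma Consecutive.eq_of_nestedIn (hf : Function.Injective f) {c e : V × V}
    (he : Consecutive f e.1 e.2) (hc : f c.1 < f c.2) (hce : NestedIn f c e) : c = e := by
  refine hce.eq_of_width_le hf ?_
  have h₁ := he.le_of_lt (hc.trans_le hce.2)
  have h₂ : f e.2 ≤ f c.2 := not_lt.1 fun h => he.2 c.2 ⟨hce.1.trans_lt hc, h⟩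
  linarith

lemma Consecutive.neg {a b : V} (hab : Consecutive f a b) : Consecutive (-f) b a :=
  ⟨by simpa using hab.1, fun w hw => hab.2 w ⟨by simpa using hw.2, by simpa using hw.1⟩⟩

lemma IsBE.neg (hf : IsBE G f) : IsBE G (-f) :=
  ⟨neg_injective.comp hf.1, fun a b c d hab hcd h => hf.2 d c b a hcd.symm hab.symm
    ⟨by simpa using h.2.2, by simpa using h.2.1, by simpa using h.1⟩⟩

lemma IsBE.of_lt_iff {x : V → ℝ} (hf : IsBE G f) (hx : ∀ u v, x u < x v ↔ f u < f v) :
    IsBE G x := by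
  refine ⟨fun u v h => hf.1 ?_, fun a b c d hab hcd h => hf.2 a b c d hab hcd ?_⟩
  · have h₁ := (hx u v).not.1 h.not_lt
    have h₂ := (hx v u).not.1 h.symm.not_lt
    exact le_antisymm (not_lt.1 h₂) (not_lt.1 h₁)
  · exact ⟨(hx a c).1 h.1, (hx c b).1 h.2.1, (hx b d).1 h.2.2⟩

lemma wraps_congr {x : V → ℝ} (hx : ∀ u v, x u < x v ↔ f u < f v) (u v w z : V) :
    Wraps G x u v w z ↔ Wraps G f u v w z := by
  have hle : ∀ a b, x a ≤ x b ↔ f a ≤ f b := fun a b => by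
    rw [← not_lt, ← not_lt, hx]
  simp only [Wraps, hle, hx]

lemma orient_of_lt {u v : V} (h : f u < f v) : orient f u v = (u, v) := if_pos h

lemma orient_comm (hf : Function.Injective f) (u v : V) : orient f u v = orient f v u := by
  rcases lt_trichotomy (f u) (f v) with h | h | h
  · rw [orient_of_lt h, orient, if_neg (lt_asymm h)]
  · rw [hf h]
  · rw [orient_of_lt h, orient, if_neg (lt_asymm h)]

lemma isArc_orient (hf : Function.Injective f) {u v : V} (h : G.Adj u v) :
    IsArc G f (orient f u v) := by
  rcases lt_or_gt_of_ne (hf.ne h.ne) with h' | h'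
  · rw [orient_of_lt h']; exact ⟨h, h'⟩
  · rw [orient_comm hf, orient_of_lt h']; exact ⟨h.symm, h'⟩

end Order

section Gaps

variable {V : Type*} {G : SimpleGraph V} {f : V → ℝ}

/-- A path from `a` to `b` avoiding `m₁` has to leave the interval `(m₁, a]`: to the left of `m₁`
it would cross `(m₁, m₂)`, to the right of `a` it would be an edge over the gap starting right
of `m₁`. -/
lemma not_connected_induce_compl_of_innermost (hf : IsBE G f) {a b m₁ m₂ : V}
    (hab : Consecutive f a b) (hm : G.Adj m₁ m₂) (hbm : f b ≤ f m₂) (hm₁ : f m₁ < f a)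
    (hmax : ∀ p q, G.Adj p q → f p ≤ f a → f b ≤ f q → f p ≤ f m₁) :
    ¬ (G.induce ({m₁}ᶜ : Set V)).Connected := by
  intro hconn
  have ha : a ∈ ({m₁}ᶜ : Set V) := fun h => hm₁.ne (congrArg f h).symm
  have hb : b ∈ ({m₁}ᶜ : Set V) := fun h => (hm₁.trans hab.1).ne (congrArg f h).symm
  obtain ⟨walk⟩ := hconn.preconnected ⟨a, ha⟩ ⟨b, hb⟩
  obtain ⟨d, -, ⟨hx₁, hx₂⟩, hy⟩ := walk.exists_boundary_dart
    {x | f m₁ < f x.1 ∧ f x.1 ≤ f a} ⟨hm₁, le_rfl⟩ fun h => h.2.not_gt hab.1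
  have hxy : G.Adj d.fst.1 d.snd.1 := d.adj
  rcases lt_trichotomy (f d.snd.1) (f m₁) with h | h | h
  · exact hf.2 _ _ m₁ m₂ hxy.symm hm ⟨h, hx₁, hx₂.trans_lt (hab.1.trans_le hbm)⟩
  · exact d.snd.2 (hf.1 h)
  · have hay : f a < f d.snd.1 := lt_of_not_ge fun h' => hy ⟨h, h'⟩
    have hby : f b ≤ f d.snd.1 := not_lt.1 fun h' => hab.2 _ ⟨hay, h'⟩
    exact (hmax _ _ hxy hx₂ hby).not_gt hx₁

/-- Otherwise an endpoint of the innermost edge over the gap `(a, b)` is a cut vertex. -/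
theorem Consecutive.adj [Fintype V] (hf : IsBE G f)
    (hdel : ∀ v : V, (G.induce ({v}ᶜ : Set V)).Connected)
    {s t : V} (hs : ∀ v, f s ≤ f v) (ht : ∀ v, f v ≤ f t) (hst : G.Adj s t)
    {a b : V} (hab : Consecutive f a b) : G.Adj a b := by
  classical
  let wrappers := Finset.univ.filter fun p : V × V => G.Adj p.1 p.2 ∧ NestedIn f (a, b) p
  obtain ⟨m, hm, hmin⟩ := wrappers.exists_min_image (fun p => f p.2 - f p.1)
    ⟨(s, t), Finset.mem_filter.2 ⟨Finset.mem_univ _, hst, hs a, ht b⟩⟩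
  simp only [wrappers, Finset.mem_filter, Finset.mem_univ, true_and] at hm hmin
  have hinner : ∀ p, G.Adj p.1 p.2 → NestedIn f (a, b) p → NestedIn f m p := by
    intro p hp hbp
    rcases NestedIn.total hf hm.1 hp hab.1 hm.2 hbp with hmp | hpm
    · exact hmp
    · rw [hpm.eq_of_width_le hf.1 (hmin p ⟨hp, hbp⟩)]
      exact NestedIn.refl f m
  by_cases hmab : m = (a, b)
  · simpa [hmab] using hm.1
  have hside : f m.1 < f a ∨ f b < f m.2 := by
    by_contra! h
    exact hmab (Prod.ext (hf.1 (le_antisymm hm.2.1 h.1)) (hf.1 (le_antisymm h.2 hm.2.2)))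
  rcases hside with h | h
  · exact absurd (hdel m.1) <| not_connected_induce_compl_of_innermost hf hab hm.1 hm.2.2 h
      fun p q hpq hpa hbq => (hinner (p, q) hpq ⟨hpa, hbq⟩).1
  · refine absurd (hdel m.2) <| not_connected_induce_compl_of_innermost hf.neg hab.neg hm.1.symm
      (by simpa using hm.2.1) (by simpa using h) fun p q hpq hpb haq => ?_
    simp only [Pi.neg_apply, neg_le_neg_iff] at hpb haq ⊢
    exact (hinner (q, p) hpq.symm ⟨haq, hpb⟩).2

lemma exists_consecutive_le [Finite V] {w z : V} (h : f w < f z) :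
    ∃ b, Consecutive f w b ∧ f b ≤ f z := by
  have : Fintype V := Fintype.ofFinite V
  classical
  obtain ⟨b, hb, hmin⟩ := (Finset.univ.filter fun y => f w < f y).exists_min_image f
    ⟨z, by simpa using h⟩
  simp only [Finset.mem_filter, Finset.mem_univ, true_and] at hb hmin
  exact ⟨b, ⟨hb, fun y hy => (hmin y hy.1).not_gt hy.2⟩, hmin z h⟩

end Gaps

section Laminar

open Finset Classical

variable {V : Type*} [Fintype V] (G : SimpleGraph V) (f : V → ℝ)

noncomputable def arcsUnder (e : V × V) : Finset (V × V) :=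
  univ.filter fun p => IsArc G f p ∧ NestedIn f p e

noncomputable def arcsBelow (e : V × V) : Finset (V × V) :=
  (arcsUnder G f e).erase e

noncomputable def arcsAbove (e : V × V) : Finset (V × V) :=
  univ.filter fun q => IsArc G f q ∧ e ∈ arcsBelow G f q

noncomputable def children (e : V × V) : Finset (V × V) :=
  (arcsBelow G f e).filter fun c => ∀ q ∈ arcsBelow G f e, NestedIn f c q → q = c

noncomputable def leaves (e : V × V) : Finset (V × V) :=
  (arcsUnder G f e).filter fun c => Consecutive f c.1 c.2

variable {G f} {c e p q : V × V}

lemma mem_arcsUnder : p ∈ arcsUnder G f e ↔ IsArc G f p ∧ NestedIn f p e := by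
  simp [arcsUnder]

lemma mem_arcsBelow : p ∈ arcsBelow G f e ↔ p ≠ e ∧ IsArc G f p ∧ NestedIn f p e := by
  simp [arcsBelow, mem_arcsUnder]

lemma mem_arcsAbove : q ∈ arcsAbove G f e ↔ IsArc G f q ∧ e ∈ arcsBelow G f q := by
  simp [arcsAbove]

lemma mem_children :
    c ∈ children G f e ↔ c ∈ arcsBelow G f e ∧ ∀ q ∈ arcsBelow G f e, NestedIn f c q → q = c :=
  mem_filter

lemma mem_leaves : c ∈ leaves G f e ↔ c ∈ arcsUnder G f e ∧ Consecutive f c.1 c.2 :=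
  mem_filter

lemma self_mem_arcsUnder (he : IsArc G f e) : e ∈ arcsUnder G f e :=
  mem_arcsUnder.2 ⟨he, NestedIn.refl f e⟩

lemma mem_arcsBelow_of_mem_arcsUnder (hf : Function.Injective f) (hc : c ∈ arcsBelow G f e)
    (hp : p ∈ arcsUnder G f c) : p ∈ arcsBelow G f e := by
  obtain ⟨hce, -, hce'⟩ := mem_arcsBelow.1 hc
  obtain ⟨hp, hpc⟩ := mem_arcsUnder.1 hp
  refine mem_arcsBelow.2 ⟨fun hpe => hce ?_, hp, hpc.trans hce'⟩
  subst hpe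
  exact NestedIn.antisymm hf hce' hpc

lemma arcsUnder_ssubset (hf : Function.Injective f) (he : IsArc G f e)
    (hp : p ∈ arcsBelow G f e) : arcsUnder G f p ⊂ arcsUnder G f e := by
  refine (ssubset_iff_of_subset fun q hq => ?_).2 ⟨e, self_mem_arcsUnder he, fun hep => ?_⟩
  · exact mem_of_mem_erase (mem_arcsBelow_of_mem_arcsUnder hf hp hq)
  · exact (mem_arcsBelow.1 (mem_arcsBelow_of_mem_arcsUnder hf hp hep)).1 rfl

lemma Consecutive.arcsBelow_eq_empty (hf : Function.Injective f)
    (he : Consecutive f e.1 e.2) : arcsBelow G f e = ∅ :=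
  eq_empty_of_forall_notMem fun _ hp =>
    let ⟨hpe, hp, hpe'⟩ := mem_arcsBelow.1 hp
    hpe (he.eq_of_nestedIn hf hp.2 hpe')

lemma consecutive_of_arcsBelow_eq_empty (hgap : ∀ a b, Consecutive f a b → G.Adj a b)
    (he : IsArc G f e) (h : arcsBelow G f e = ∅) : Consecutive f e.1 e.2 := by
  refine ⟨he.2, fun w hw => ?_⟩
  obtain ⟨b, hwb, hbe⟩ := exists_consecutive_le hw.2
  have hmem : (w, b) ∈ arcsBelow G f e :=
    mem_arcsBelow.2 ⟨fun h => hw.1.ne (congrArg (f ∘ Prod.fst) h).symm,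
      ⟨hgap w b hwb, hwb.1⟩, hw.1.le, hbe⟩
  simp [h] at hmem

lemma exists_mem_children_of_mem_arcsBelow (hf : Function.Injective f)
    (hp : p ∈ arcsBelow G f e) : ∃ c ∈ children G f e, NestedIn f p c := by
  obtain ⟨c, hc, hmax⟩ := ((arcsBelow G f e).filter (NestedIn f p)).exists_max_image
    (fun c => f c.2 - f c.1) ⟨p, mem_filter.2 ⟨hp, NestedIn.refl f p⟩⟩
  simp only [mem_filter] at hc hmax
  refine ⟨c, mem_children.2 ⟨hc.1, fun q hq hcq => ?_⟩, hc.2⟩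
  exact (hcq.eq_of_width_le hf (hmax q ⟨hq, hc.2.trans hcq⟩)).symm

lemma pairwiseDisjoint_children (hf : IsBE G f) :
    (children G f e : Set (V × V)).PairwiseDisjoint (arcsUnder G f) := by
  intro c₁ hc₁ c₂ hc₂ hne
  refine disjoint_left.2 fun p hp₁ hp₂ => hne ?_
  obtain ⟨hb₁, hmax₁⟩ := mem_children.1 hc₁
  obtain ⟨hb₂, hmax₂⟩ := mem_children.1 hc₂
  obtain ⟨hp, hpc₁⟩ := mem_arcsUnder.1 hp₁
  rcases NestedIn.total hf (mem_arcsBelow.1 hb₁).2.1.1 (mem_arcsBelow.1 hb₂).2.1.1 hp.2 hpc₁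
    (mem_arcsUnder.1 hp₂).2 with h | h
  · exact (hmax₁ c₂ hb₂ h).symm
  · exact hmax₂ c₁ hb₁ h

lemma arcsBelow_eq_biUnion_children (hf : Function.Injective f) :
    arcsBelow G f e = (children G f e).biUnion (arcsUnder G f) := by
  ext p
  simp only [mem_biUnion]
  constructor
  · intro hp
    obtain ⟨c, hc, hpc⟩ := exists_mem_children_of_mem_arcsBelow hf hp
    exact ⟨c, hc, mem_arcsUnder.2 ⟨(mem_arcsBelow.1 hp).2.1, hpc⟩⟩
  · rintro ⟨c, hc, hp⟩
    exact mem_arcsBelow_of_mem_arcsUnder hf (mem_children.1 hc).1 hp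

lemma sum_arcsBelow_eq_sum_children {M : Type*} [AddCommMonoid M] (hf : IsBE G f)
    (g : V × V → M) :
    ∑ p ∈ arcsBelow G f e, g p = ∑ c ∈ children G f e, ∑ p ∈ arcsUnder G f c, g p := by
  rw [arcsBelow_eq_biUnion_children hf.1, sum_biUnion (pairwiseDisjoint_children hf)]

lemma insert_arcsAbove_subset (hf : Function.Injective f) (he : IsArc G f e)
    (hp : p ∈ arcsBelow G f e) : insert e (arcsAbove G f e) ⊆ arcsAbove G f p := by
  intro q hq
  rcases mem_insert.1 hq with rfl | hq
  · exact mem_arcsAbove.2 ⟨he, hp⟩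
  · obtain ⟨hq, heq⟩ := mem_arcsAbove.1 hq
    exact mem_arcsAbove.2 ⟨hq, mem_arcsBelow_of_mem_arcsUnder hf heq (mem_of_mem_erase hp)⟩

lemma arcsAbove_of_mem_children (hf : IsBE G f) (he : IsArc G f e)
    (hc : c ∈ children G f e) : arcsAbove G f c = insert e (arcsAbove G f e) := by
  obtain ⟨hcb, hmax⟩ := mem_children.1 hc
  refine (Subset.antisymm (fun q hq => ?_) (insert_arcsAbove_subset hf.1 he hcb))
  obtain ⟨hq, hcq⟩ := mem_arcsAbove.1 hq
  obtain ⟨hcq, hc, hcq'⟩ := mem_arcsBelow.1 hcq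
  obtain ⟨-, -, hce⟩ := mem_arcsBelow.1 hcb
  rw [mem_insert, mem_arcsAbove]
  by_cases hqe : q = e
  · exact Or.inl hqe
  rcases NestedIn.total hf hq.1 he.1 hc.2 hcq' hce with h | h
  · exact absurd (hmax q (mem_arcsBelow.2 ⟨hqe, hq, h⟩) hcq').symm hcq
  · exact Or.inr ⟨hq, mem_arcsBelow.2 ⟨Ne.symm hqe, he, h⟩⟩

end Laminar

section Construction

open Finset Classical

variable {V : Type*} [Fintype V] (G : SimpleGraph V) (ω : V → V → ℝ) (f : V → ℝ) (H₀ : ℝ)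

noncomputable def weightUnder (e : V × V) : ℝ :=
  ∑ p ∈ arcsUnder G f e, ω p.1 p.2

noncomputable def belowShare (e : V × V) : ℝ :=
  (weightUnder G ω f e - ω e.1 e.2) / weightUnder G ω f e

noncomputable def yTop (e : V × V) : ℝ :=
  H₀ * ∏ q ∈ arcsAbove G f e, belowShare G ω f q

noncomputable def yBot (e : V × V) : ℝ :=
  yTop G ω f H₀ e * belowShare G ω f e

noncomputable def arcWidth (e : V × V) : ℝ :=
  weightUnder G ω f e / yTop G ω f H₀ e

noncomputable def xcoord (v : V) : ℝ :=
  ∑ c ∈ univ.filter (fun c : V × V => IsArc G f c ∧ Consecutive f c.1 c.2 ∧ f c.2 ≤ f v),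
    arcWidth G ω f H₀ c

variable {G ω f H₀} {e p : V × V}

lemma weightUnder_sub_self (he : IsArc G f e) :
    weightUnder G ω f e - ω e.1 e.2 = ∑ p ∈ arcsBelow G f e, ω p.1 p.2 :=
  (sum_erase_eq_sub (self_mem_arcsUnder he)).symm

lemma weightUnder_pos (hpos : ∀ u v, G.Adj u v → 0 < ω u v)
    (he : IsArc G f e) : 0 < weightUnder G ω f e :=
  sum_pos (fun _ hp => hpos _ _ (mem_arcsUnder.1 hp).1.1) ⟨e, self_mem_arcsUnder he⟩

lemma belowShare_nonneg (hpos : ∀ u v, G.Adj u v → 0 < ω u v)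
    (he : IsArc G f e) : 0 ≤ belowShare G ω f e := by
  rw [belowShare, weightUnder_sub_self he]
  exact div_nonneg (sum_nonneg fun p hp => (hpos _ _ (mem_arcsBelow.1 hp).2.1.1).le)
    (weightUnder_pos hpos he).le

lemma belowShare_pos (hpos : ∀ u v, G.Adj u v → 0 < ω u v)
    (he : IsArc G f e) (hb : (arcsBelow G f e).Nonempty) :
    0 < belowShare G ω f e := by
  rw [belowShare, weightUnder_sub_self he]
  exact div_pos (sum_pos (fun p hp => hpos _ _ (mem_arcsBelow.1 hp).2.1.1) hb)
    (weightUnder_pos hpos he)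

lemma belowShare_le_one (hpos : ∀ u v, G.Adj u v → 0 < ω u v)
    (he : IsArc G f e) : belowShare G ω f e ≤ 1 := by
  rw [belowShare, div_le_one (weightUnder_pos hpos he)]
  linarith [hpos _ _ he.1]

lemma belowShare_eq_zero (he : IsArc G f e) (hb : arcsBelow G f e = ∅) :
    belowShare G ω f e = 0 := by
  rw [belowShare, weightUnder_sub_self he, hb, sum_empty, zero_div]

lemma yTop_pos (hpos : ∀ u v, G.Adj u v → 0 < ω u v) (hH : 0 < H₀) :
    0 < yTop G ω f H₀ e := by
  refine mul_pos hH (prod_pos fun q hq => ?_)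
  obtain ⟨hq, heq⟩ := mem_arcsAbove.1 hq
  exact belowShare_pos hpos hq ⟨e, heq⟩

lemma yTop_le (hpos : ∀ u v, G.Adj u v → 0 < ω u v) (hH : 0 < H₀) :
    yTop G ω f H₀ e ≤ H₀ := by
  refine mul_le_of_le_one_right hH.le (prod_le_one (fun q hq => ?_) fun q hq => ?_)
  · exact belowShare_nonneg hpos (mem_arcsAbove.1 hq).1
  · exact belowShare_le_one hpos (mem_arcsAbove.1 hq).1

lemma yBot_nonneg (hpos : ∀ u v, G.Adj u v → 0 < ω u v) (hH : 0 < H₀)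
    (he : IsArc G f e) : 0 ≤ yBot G ω f H₀ e :=
  mul_nonneg (yTop_pos hpos hH).le (belowShare_nonneg hpos he)

lemma yBot_eq_prod :
    yBot G ω f H₀ e = H₀ * ∏ q ∈ insert e (arcsAbove G f e), belowShare G ω f q := by
  rw [prod_insert fun h => (mem_arcsBelow.1 (mem_arcsAbove.1 h).2).1 rfl, yBot, yTop]
  ring

lemma yTop_le_yBot (hpos : ∀ u v, G.Adj u v → 0 < ω u v) (hH : 0 < H₀)
    (hf : Function.Injective f) (he : IsArc G f e)
    (hp : p ∈ arcsBelow G f e) : yTop G ω f H₀ p ≤ yBot G ω f H₀ e := by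
  rw [yBot_eq_prod, yTop]
  refine mul_le_mul_of_nonneg_left (prod_le_prod_of_subset_of_le_one
    (insert_arcsAbove_subset hf he hp) (fun q hq => ?_) fun q hq _ => ?_) hH.le
  · exact belowShare_nonneg hpos (mem_arcsAbove.1 hq).1
  · exact belowShare_le_one hpos (mem_arcsAbove.1 hq).1

lemma yTop_of_mem_children (hf : IsBE G f) (he : IsArc G f e) {c : V × V}
    (hc : c ∈ children G f e) : yTop G ω f H₀ c = yBot G ω f H₀ e := by
  rw [yBot_eq_prod, yTop, arcsAbove_of_mem_children hf he hc]

lemma yBot_eq_zero (he : IsArc G f e) (hb : arcsBelow G f e = ∅) :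
    yBot G ω f H₀ e = 0 := by
  rw [yBot, belowShare_eq_zero he hb, mul_zero]

/-- The widths of the gaps under an arc add up to its own width: the arcs just below `e` all
reach height `yBot e`, and the weight strictly below `e` is the sum of their weights. -/
theorem sum_leaves_arcWidth {e : V × V} (hf : IsBE G f)
    (hgap : ∀ a b, Consecutive f a b → G.Adj a b)
    (hpos : ∀ u v, G.Adj u v → 0 < ω u v) (hH : 0 < H₀) (he : IsArc G f e) :
    ∑ c ∈ leaves G f e, arcWidth G ω f H₀ c = arcWidth G ω f H₀ e := by
  by_cases hb : arcsBelow G f e = ∅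
  · have hcons := consecutive_of_arcsBelow_eq_empty hgap he hb
    have hleaves : leaves G f e = {e} := by
      ext c
      rw [mem_leaves, mem_singleton]
      constructor
      · rintro ⟨hc, -⟩
        exact hcons.eq_of_nestedIn hf.1 (mem_arcsUnder.1 hc).1.2 (mem_arcsUnder.1 hc).2
      · rintro rfl
        exact ⟨self_mem_arcsUnder he, hcons⟩
    rw [hleaves, sum_singleton]
  have hcons : ¬ Consecutive f e.1 e.2 := fun h => hb (h.arcsBelow_eq_empty hf.1)
  have hbne : (arcsBelow G f e).Nonempty := nonempty_iff_ne_empty.2 hb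
  have hchild : ∀ c ∈ children G f e,
      ∑ p ∈ leaves G f c, arcWidth G ω f H₀ p = weightUnder G ω f c / yBot G ω f H₀ e :=
    fun c hc => by
      have hc' : IsArc G f c := (mem_arcsBelow.1 (mem_children.1 hc).1).2.1
      rw [sum_leaves_arcWidth (e := c) hf hgap hpos hH hc', arcWidth,
        yTop_of_mem_children hf he hc]
  calc ∑ c ∈ leaves G f e, arcWidth G ω f H₀ c
      = ∑ p ∈ arcsBelow G f e, if Consecutive f p.1 p.2 then arcWidth G ω f H₀ p else 0 := by
        rw [leaves, sum_filter, ← add_sum_erase _ _ (self_mem_arcsUnder he), if_neg hcons,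
          zero_add, arcsBelow]
    _ = ∑ c ∈ children G f e, weightUnder G ω f c / yBot G ω f H₀ e := by
        rw [sum_arcsBelow_eq_sum_children hf]
        refine sum_congr rfl fun c hc => ?_
        rw [← hchild c hc, leaves, sum_filter]
    _ = (weightUnder G ω f e - ω e.1 e.2) / yBot G ω f H₀ e := by
        rw [← sum_div, weightUnder_sub_self he, sum_arcsBelow_eq_sum_children hf]
        rfl
    _ = arcWidth G ω f H₀ e := by
        have hW := weightUnder_pos hpos he
        have hT : 0 < yTop G ω f H₀ e := yTop_pos hpos hH
        have hS : weightUnder G ω f e - ω e.1 e.2 ≠ 0 := by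
          rw [weightUnder_sub_self he]
          exact (sum_pos (fun p hp => hpos _ _ (mem_arcsBelow.1 hp).2.1.1) hbne).ne'
        rw [arcWidth, yBot, belowShare]
        field_simp
termination_by (arcsUnder G f e).card
decreasing_by exact card_lt_card (arcsUnder_ssubset hf.1 he (mem_children.1 hc).1)

lemma xcoord_sub {u v : V} (h : f u ≤ f v) :
    xcoord G ω f H₀ v - xcoord G ω f H₀ u = ∑ c ∈ leaves G f (u, v), arcWidth G ω f H₀ c := by
  rw [sub_eq_iff_eq_add', xcoord, xcoord, ← sum_union]
  · congr 1
    ext c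
    simp only [mem_filter, mem_univ, true_and, mem_union, mem_leaves, mem_arcsUnder, NestedIn]
    constructor
    · rintro ⟨hc, hcons, hcv⟩
      by_cases hcu : f c.2 ≤ f u
      · exact Or.inl ⟨hc, hcons, hcu⟩
      · exact Or.inr ⟨⟨hc, hcons.le_of_lt (not_le.1 hcu), hcv⟩, hcons⟩
    · rintro (⟨hc, hcons, hcu⟩ | ⟨⟨hc, -, hcv⟩, hcons⟩)
      · exact ⟨hc, hcons, hcu.trans h⟩
      · exact ⟨hc, hcons, hcv⟩
  · refine disjoint_left.2 fun c hc hc' => ?_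
    simp only [mem_filter, mem_univ, true_and, mem_leaves, mem_arcsUnder, NestedIn] at hc hc'
    linarith [hc.1.2, hc.2.2, hc'.1.2.1]

lemma xcoord_sub_mul_yTop (hf : IsBE G f) (hgap : ∀ a b, Consecutive f a b → G.Adj a b)
    (hpos : ∀ u v, G.Adj u v → 0 < ω u v) (hH : 0 < H₀) (he : IsArc G f e) :
    (xcoord G ω f H₀ e.2 - xcoord G ω f H₀ e.1) * yTop G ω f H₀ e = weightUnder G ω f e := by
  rw [xcoord_sub he.2.le, sum_leaves_arcWidth hf hgap hpos hH he, arcWidth,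
    div_mul_cancel₀ _ (yTop_pos hpos hH).ne']

lemma xcoord_sub_mul_height (hf : IsBE G f) (hgap : ∀ a b, Consecutive f a b → G.Adj a b)
    (hpos : ∀ u v, G.Adj u v → 0 < ω u v) (hH : 0 < H₀) (he : IsArc G f e) :
    (xcoord G ω f H₀ e.2 - xcoord G ω f H₀ e.1) * (yTop G ω f H₀ e - yBot G ω f H₀ e)
      = ω e.1 e.2 := by
  have hW := weightUnder_pos hpos he
  calc _ = (xcoord G ω f H₀ e.2 - xcoord G ω f H₀ e.1) * yTop G ω f H₀ e * ω e.1 e.2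
        / weightUnder G ω f e := by
        rw [yBot, belowShare]
        field_simp
        ring
    _ = ω e.1 e.2 := by
        rw [xcoord_sub_mul_yTop hf hgap hpos hH he]
        field_simp

lemma xcoord_lt_xcoord (hgap : ∀ a b, Consecutive f a b → G.Adj a b)
    (hpos : ∀ u v, G.Adj u v → 0 < ω u v) (hH : 0 < H₀) {u v : V} (h : f u < f v) :
    xcoord G ω f H₀ u < xcoord G ω f H₀ v := by
  obtain ⟨b, hub, hbv⟩ := exists_consecutive_le h
  refine sub_pos.1 ?_
  rw [xcoord_sub h.le]
  refine sum_pos (fun c hc => div_pos ?_ (yTop_pos hpos hH)) ⟨(u, b), ?_⟩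
  · exact weightUnder_pos hpos (mem_arcsUnder.1 (mem_leaves.1 hc).1).1
  · exact mem_leaves.2 ⟨mem_arcsUnder.2 ⟨⟨hgap u b hub, hub.1⟩, le_rfl, hbv⟩, hub⟩

lemma xcoord_lt_iff (hf : Function.Injective f) (hgap : ∀ a b, Consecutive f a b → G.Adj a b)
    (hpos : ∀ u v, G.Adj u v → 0 < ω u v) (hH : 0 < H₀) (u v : V) :
    xcoord G ω f H₀ u < xcoord G ω f H₀ v ↔ f u < f v := by
  refine ⟨fun h => ?_, xcoord_lt_xcoord hgap hpos hH⟩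
  rcases lt_trichotomy (f u) (f v) with h' | h' | h'
  · exact h'
  · exact absurd h (by rw [hf h']; exact lt_irrefl _)
  · exact absurd h (xcoord_lt_xcoord hgap hpos hH h').not_gt

end Construction

section Embedding

open Finset Classical

variable {V : Type*} [Fintype V] {G : SimpleGraph V} {ω : V → V → ℝ} {f : V → ℝ} {H₀ : ℝ}

lemma wraps_iff_mem_arcsBelow {u v w z : V} (huv : f u < f v) :
    Wraps G f u v w z ↔ G.Adj u v ∧ (w, z) ∈ arcsBelow G f (u, v) := by
  rw [Wraps, mem_arcsBelow, IsArc, NestedIn]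
  constructor
  · rintro ⟨huv', hwz, hne, huw, hwz', hzv⟩
    exact ⟨huv', fun h => hne (by simp_all), ⟨hwz, hwz'⟩, huw, hzv⟩
  · rintro ⟨huv', hne, ⟨hwz, hwz'⟩, huw, hzv⟩
    refine ⟨huv', hwz, fun h => ?_, huw, hwz', hzv⟩
    rcases Sym2.eq_iff.1 h with ⟨rfl, rfl⟩ | ⟨rfl, rfl⟩
    · exact hne rfl
    · linarith

lemma arcsAbove_eq_empty {s t : V} (hf : Function.Injective f) (hs : ∀ v, f s ≤ f v)
    (ht : ∀ v, f v ≤ f t) : arcsAbove G f (s, t) = ∅ :=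
  eq_empty_of_forall_notMem fun q hq => by
    obtain ⟨hne, -, hst⟩ := mem_arcsBelow.1 (mem_arcsAbove.1 hq).2
    exact hne (NestedIn.antisymm hf hst ⟨hs _, ht _⟩)

lemma weightUnder_eq_totalWeight {s t : V} (hs : ∀ v, f s ≤ f v) (ht : ∀ v, f v ≤ f t) :
    weightUnder G ω f (s, t) = totalWeight G ω f := by
  simp [weightUnder, arcsUnder, totalWeight, sum_filter, IsArc, NestedIn, hs, ht]

lemma yTop_eq_of_extreme {s t : V} (hf : Function.Injective f) (hs : ∀ v, f s ≤ f v)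
    (ht : ∀ v, f v ≤ f t) : yTop G ω f H₀ (s, t) = H₀ := by
  rw [yTop, arcsAbove_eq_empty hf hs ht, prod_empty, mul_one]

theorem isTwoDimBE_xcoord (hf : IsBE G f) (hgap : ∀ a b, Consecutive f a b → G.Adj a b)
    (hpos : ∀ u v, G.Adj u v → 0 < ω u v) (hH : 0 < H₀) :
    IsTwoDimBE G ω (xcoord G ω f H₀) (fun u v => yBot G ω f H₀ (orient f u v))
      (fun u v => yTop G ω f H₀ (orient f u v)) := by
  have hx := xcoord_lt_iff hf.1 hgap hpos hH
  refine ⟨hf.of_lt_iff hx, fun u v => congrArg _ (orient_comm hf.1 u v),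
    fun u v => congrArg _ (orient_comm hf.1 u v),
    fun u v huv => yBot_nonneg hpos hH (isArc_orient hf.1 huv), fun u v huv hxuv => ?_,
    fun u v huv hxuv => ?_⟩
  · have he : IsArc G f (u, v) := ⟨huv, (hx u v).1 hxuv⟩
    simp only [orient_of_lt he.2]
    exact xcoord_sub_mul_height hf hgap hpos hH he
  · have he : IsArc G f (u, v) := ⟨huv, (hx u v).1 hxuv⟩
    simp only [wraps_congr hx, wraps_iff_mem_arcsBelow he.2, orient_of_lt he.2, huv, true_and]
    refine ⟨fun w z hwz => ?_, ?_⟩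
    · rw [orient_of_lt (mem_arcsBelow.1 hwz).2.1.2]
      exact yTop_le_yBot hpos hH hf.1 he hwz
    by_cases hb : arcsBelow G f (u, v) = ∅
    · exact Or.inr ⟨by simp [hb], yBot_eq_zero he hb⟩
    · obtain ⟨c, hc⟩ : (children G f (u, v)).Nonempty := nonempty_iff_ne_empty.2 fun h =>
        hb (by rw [arcsBelow_eq_biUnion_children hf.1, h, biUnion_empty])
      refine Or.inl ⟨c.1, c.2, (mem_children.1 hc).1, ?_⟩
      rw [orient_of_lt (mem_arcsBelow.1 (mem_children.1 hc).1).2.1.2]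
      exact (yTop_of_mem_children hf he hc).symm

theorem isBoundingBox_xcoord (hf : IsBE G f) (hgap : ∀ a b, Consecutive f a b → G.Adj a b)
    (hpos : ∀ u v, G.Adj u v → 0 < ω u v) (hH : 0 < H₀) {s t : V} (hs : ∀ v, f s ≤ f v)
    (ht : ∀ v, f v ≤ f t) (hst : G.Adj s t) :
    IsBoundingBox G (xcoord G ω f H₀) (fun u v => yBot G ω f H₀ (orient f u v))
      (fun u v => yTop G ω f H₀ (orient f u v)) (xcoord G ω f H₀ s) (xcoord G ω f H₀ t) 0 H₀ := by
  have hx := xcoord_lt_iff hf.1 hgap hpos hH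
  have hle : ∀ u v, f u ≤ f v → xcoord G ω f H₀ u ≤ xcoord G ω f H₀ v := fun u v h =>
    not_lt.1 fun h' => h.not_gt ((hx v u).1 h')
  have hxst : xcoord G ω f H₀ s < xcoord G ω f H₀ t :=
    (hx s t).2 (lt_of_le_of_ne (hs t) (hf.1.ne hst.ne))
  obtain ⟨b, hsb, -⟩ := exists_consecutive_le ((hx s t).1 hxst)
  refine ⟨fun u v huv _ => ⟨hle s u (hs u), hle v t (ht v),
    yBot_nonneg hpos hH (isArc_orient hf.1 huv), yTop_le hpos hH⟩,
    ⟨s, t, hst, hxst, rfl⟩, ⟨s, t, hst, hxst, rfl⟩, ⟨s, b, hgap s b hsb, (hx s b).2 hsb.1, ?_⟩,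
    ⟨s, t, hst, hxst, ?_⟩⟩
  · show yBot G ω f H₀ (orient f s b) = 0
    rw [orient_of_lt hsb.1]
    exact yBot_eq_zero ⟨hgap s b hsb, hsb.1⟩ (hsb.arcsBelow_eq_empty hf.1)
  · show yTop G ω f H₀ (orient f s t) = H₀
    rw [orient_of_lt ((hx s t).1 hxst), yTop_eq_of_extreme hf.1 hs ht]

end Embedding

theorem twodim_embedding_in_prescribed_box_general {V : Type*} [Fintype V]
    (G : SimpleGraph V) (ω : V → V → ℝ)
    (hpos : ∀ u v, G.Adj u v → 0 < ω u v)
    (hbi : IsBiconnected G)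
    (f : V → ℝ) (hf : IsBE G f)
    (s t : V) (hs : ∀ v, f s ≤ f v) (ht : ∀ v, f v ≤ f t) (hst : G.Adj s t)
    (L₀ H₀ : ℝ) (hH : 0 < H₀)
    (hprod : L₀ * H₀ = totalWeight G ω f) :
    ∃ (x : V → ℝ) (ylo yhi : V → V → ℝ),
      IsTwoDimBE G ω x ylo yhi ∧
      (∀ u v : V, x u < x v ↔ f u < f v) ∧
      ∃ X₁ Y₁ : ℝ, IsBoundingBox G x ylo yhi X₁ (X₁ + L₀) Y₁ (Y₁ + H₀) := by
  have hgap : ∀ a b, Consecutive f a b → G.Adj a b := fun a b =>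
    Consecutive.adj hf hbi.2.2 hs ht hst
  have hwidth : xcoord G ω f H₀ s + L₀ = xcoord G ω f H₀ t := by
    have h := xcoord_sub_mul_yTop (e := (s, t)) hf hgap hpos hH
      ⟨hst, lt_of_le_of_ne (hs t) (hf.1.ne hst.ne)⟩
    rw [yTop_eq_of_extreme hf.1 hs ht, weightUnder_eq_totalWeight hs ht, ← hprod] at h
    linarith [mul_right_cancel₀ hH.ne' h]
  refine ⟨_, _, _, isTwoDimBE_xcoord hf hgap hpos hH, xcoord_lt_iff hf.1 hgap hpos hH,
    xcoord G ω f H₀ s, 0, ?_⟩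
  rw [hwidth, zero_add]
  exact isBoundingBox_xcoord hf hgap hpos hH hs ht hst

/-- a biconnected weighted graph with a 1-page book-embedding whose first
and last vertices are adjacent admits a two-dimensional book-embedding, supported by
that book-embedding, whose bounding box is an `L₀ × H₀` rectangle, for any prescribed
`L₀, H₀ > 0` with `L₀ · H₀` equal to the total weight of the edges. -/
theorem twodim_embedding_in_prescribed_box {V : Type*} [Fintype V]
    (G : SimpleGraph V) (ω : V → V → ℝ)
    (hsym : ∀ u v, ω u v = ω v u)
    (hpos : ∀ u v, G.Adj u v → 0 < ω u v)
    (hbi : IsBiconnected G)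
    (f : V → ℝ) (hf : IsBE G f)
    (s t : V) (hs : ∀ v, f s ≤ f v) (ht : ∀ v, f v ≤ f t) (hst : G.Adj s t)
    (L₀ H₀ : ℝ) (hL : 0 < L₀) (hH : 0 < H₀)
    (hprod : L₀ * H₀ = totalWeight G ω f) :
    ∃ (x : V → ℝ) (ylo yhi : V → V → ℝ),
      IsTwoDimBE G ω x ylo yhi ∧
      (∀ u v : V, x u < x v ↔ f u < f v) ∧
      ∃ X₁ Y₁ : ℝ, IsBoundingBox G x ylo yhi X₁ (X₁ + L₀) Y₁ (Y₁ + H₀) :=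
  twodim_embedding_in_prescribed_box_general G ω hpos hbi f hf s t hs ht hst L₀ H₀ hH hprod


end Schematic
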